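/- arXiv:math/0511530 — 7 statements merged into one kernel-verified Lean document; each statement's English description precedes it below -/
import Mathlib

section
/- Let ε ∈ {−1, 1}, b, H ∈ ℝ, and let S, t : ℝ → ℝ be twice differentiable on an open interval J with S(ρ) > 0 and W(ρ) := (S(ρ)²·(1 + ε·t'(ρ)²) + ε·b²)^{1/2} > 0 for all ρ ∈ J. Then for every ρ ∈ J the identity d/dρ ( t'(ρ)·S(ρ)² / W(ρ) ) = −2H·S(ρ) holds if and only if 2H·W(ρ)³ = −t''(ρ)·S(ρ)·(S(ρ)² + ε·b²) − 2ε·b²·t'(ρ)·S'(ρ) − t'(ρ)·(1 + ε·t'(ρ)²)·S(ρ)²·S'(ρ). -/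
/-- Section 2.1: the first-integral identity `d/dρ (t'·S²/W) = −2H·S` is equivalent to the
mean curvature equation (H-eq2) for a helicoidal surface with pitch `b` in `M²(κ)×ℝ`. -/
theorem stmt_0 (ε b H : ℝ) (hε : ε = 1 ∨ ε = -1) (a₁ a₂ : ℝ)
    (S S' S'' t t' t'' : ℝ → ℝ)
    (hS : ∀ ρ ∈ Set.Ioo a₁ a₂, HasDerivAt S (S' ρ) ρ)
    (hS' : ∀ ρ ∈ Set.Ioo a₁ a₂, HasDerivAt S' (S'' ρ) ρ)
    (ht : ∀ ρ ∈ Set.Ioo a₁ a₂, HasDerivAt t (t' ρ) ρ)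
    (ht' : ∀ ρ ∈ Set.Ioo a₁ a₂, HasDerivAt t' (t'' ρ) ρ)
    (hSpos : ∀ ρ ∈ Set.Ioo a₁ a₂, 0 < S ρ)
    (W : ℝ → ℝ)
    (hW : ∀ ρ, W ρ = Real.sqrt (S ρ ^ 2 * (1 + ε * t' ρ ^ 2) + ε * b ^ 2))
    (hWpos : ∀ ρ ∈ Set.Ioo a₁ a₂, 0 < S ρ ^ 2 * (1 + ε * t' ρ ^ 2) + ε * b ^ 2) :
    ∀ ρ ∈ Set.Ioo a₁ a₂,
      (HasDerivAt (fun x => t' x * S x ^ 2 / W x) (-2 * H * S ρ) ρ ↔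
        2 * H * W ρ ^ 3 =
          -(t'' ρ) * S ρ * (S ρ ^ 2 + ε * b ^ 2) - 2 * ε * b ^ 2 * t' ρ * S' ρ
            - t' ρ * (1 + ε * t' ρ ^ 2) * S ρ ^ 2 * S' ρ) := by
  intro ρ hρ
  have hQpos := hWpos ρ hρ
  have hSp := hSpos ρ hρ
  have hWρpos : 0 < W ρ := by
    rw [hW]; exact Real.sqrt_pos.mpr hQpos
  have hWne : W ρ ≠ 0 := ne_of_gt hWρpos
  have hW2 : W ρ ^ 2 = S ρ ^ 2 * (1 + ε * t' ρ ^ 2) + ε * b ^ 2 := by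
    rw [hW]; exact Real.sq_sqrt hQpos.le
  set Q' : ℝ := 2 * S ρ * S' ρ * (1 + ε * t' ρ ^ 2) + S ρ ^ 2 * (2 * ε * t' ρ * t'' ρ) with hQ'def
  have hQ : HasDerivAt (fun x => S x ^ 2 * (1 + ε * t' x ^ 2) + ε * b ^ 2) Q' ρ := by
    have h1 : HasDerivAt (fun x => S x ^ 2) (2 * S ρ * S' ρ) ρ := by
      have := (hS ρ hρ).fun_pow 2
      simpa [mul_comm, mul_assoc, mul_left_comm] using this
    have h2 : HasDerivAt (fun x => 1 + ε * t' x ^ 2) (ε * (2 * t' ρ * t'' ρ)) ρ := by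
      have := ((ht' ρ hρ).pow 2).const_mul ε
      simpa [mul_comm, mul_assoc, mul_left_comm] using this.const_add 1
    have := (h1.fun_mul h2).add_const (ε * b ^ 2)
    refine this.congr_deriv ?_
    rw [hQ'def]; ring
  have hWe : W = fun x => Real.sqrt (S x ^ 2 * (1 + ε * t' x ^ 2) + ε * b ^ 2) :=
    funext hW
  have hW' : HasDerivAt W (Q' / (2 * W ρ)) ρ := by
    rw [hWe]
    have := hQ.sqrt (ne_of_gt hQpos)
    simpa [← hW ρ] using this
  set D : ℝ := ((t'' ρ * S ρ ^ 2 + t' ρ * (2 * S ρ * S' ρ)) * W ρ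
      - t' ρ * S ρ ^ 2 * (Q' / (2 * W ρ))) / W ρ ^ 2 with hDdef
  have hf : HasDerivAt (fun x => t' x * S x ^ 2 / W x) D ρ := by
    have h1 : HasDerivAt (fun x => t' x * S x ^ 2)
        (t'' ρ * S ρ ^ 2 + t' ρ * (2 * S ρ * S' ρ)) ρ := by
      have hpow : HasDerivAt (fun x => S x ^ 2) (2 * S ρ * S' ρ) ρ := by
        have := (hS ρ hρ).fun_pow 2
        simpa [mul_comm, mul_assoc, mul_left_comm] using this
      exact (ht' ρ hρ).mul hpow
    exact h1.div hW' hWne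
  constructor
  · intro h
    have hde : -2 * H * S ρ = D := h.unique hf
    have h3 : -2 * H * S ρ * W ρ ^ 3 = D * W ρ ^ 3 := by rw [hde]
    have hDW : D * W ρ ^ 3
        = (t'' ρ * S ρ ^ 2 + t' ρ * (2 * S ρ * S' ρ)) * W ρ ^ 2
          - t' ρ * S ρ ^ 2 * Q' / 2 := by
      rw [hDdef]; field_simp
    rw [hDW, hW2] at h3
    have hSne : S ρ ≠ 0 := ne_of_gt hSp
    apply mul_left_cancel₀ hSne
    rw [hQ'def] at h3
    nlinarith [h3]
  · intro h
    have hDW : D * W ρ ^ 3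
        = (t'' ρ * S ρ ^ 2 + t' ρ * (2 * S ρ * S' ρ)) * W ρ ^ 2
          - t' ρ * S ρ ^ 2 * Q' / 2 := by
      rw [hDdef]; field_simp
    have hde : -2 * H * S ρ = D := by
      apply mul_right_cancel₀ (b := W ρ ^ 3) (pow_ne_zero 3 hWne)
      rw [hDW, hW2, hQ'def]
      have : -2 * H * S ρ * W ρ ^ 3 = -(S ρ * (2 * H * W ρ ^ 3)) := by ring
      rw [this, h]; ring
    rw [hde]; exact hf
end

section
/- Let λ > 0 and H ∈ ℝ, and let u be a differentiable real function on (0, ∞) satisfying u'(ρ) = −2H − u(ρ)·λ·coth(λρ) for all ρ > 0. Then the function F(ρ) := u(ρ)·sinh(λρ)/λ + (4H/λ²)·sinh²(λρ/2) is constant on (0, ∞). -/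
/-- For `κ = −l² < 0`, the flux `I' = u·sinh(lρ)/l + (4H/l²)·sinh²(lρ/2)` is a first integral
of the angle ODE `u' = −2H − u·l·coth(lρ)` for rotational CMC surfaces (equation (flux2)). -/
theorem stmt_1 (l H : ℝ) (hl : 0 < l) (u u' : ℝ → ℝ)
    (hu : ∀ ρ ∈ Set.Ioi (0:ℝ), HasDerivAt u (u' ρ) ρ)
    (hode : ∀ ρ ∈ Set.Ioi (0:ℝ),
      u' ρ = -2 * H - u ρ * (l * (Real.cosh (l * ρ) / Real.sinh (l * ρ)))) :
    ∀ ρ₁ ∈ Set.Ioi (0:ℝ), ∀ ρ₂ ∈ Set.Ioi (0:ℝ),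
      u ρ₁ * Real.sinh (l * ρ₁) / l + (4 * H / l ^ 2) * Real.sinh (l * ρ₁ / 2) ^ 2 =
      u ρ₂ * Real.sinh (l * ρ₂) / l + (4 * H / l ^ 2) * Real.sinh (l * ρ₂ / 2) ^ 2 := by
  set F : ℝ → ℝ := fun ρ =>
    u ρ * Real.sinh (l * ρ) / l + (4 * H / l ^ 2) * Real.sinh (l * ρ / 2) ^ 2 with hF
  have key : ∀ ρ ∈ Set.Ioi (0:ℝ), HasDerivAt F 0 ρ := by
    intro ρ hρ
    have hρ0 : (0:ℝ) < ρ := hρ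
    have hspos : 0 < Real.sinh (l * ρ) := Real.sinh_pos_iff.2 (by positivity)
    have hs : Real.sinh (l * ρ) ≠ 0 := ne_of_gt hspos
    have d1 : HasDerivAt (fun x => Real.sinh (l * x)) (Real.cosh (l * ρ) * l) ρ := by
      simpa [Function.comp_def] using (Real.hasDerivAt_sinh (l * ρ)).comp ρ ((hasDerivAt_id ρ).const_mul l)
    have d2 : HasDerivAt (fun x => Real.sinh (l * x / 2)) (Real.cosh (l * ρ / 2) * (l / 2)) ρ := by
      have h0 : HasDerivAt (fun x : ℝ => l * x / 2) (l / 2) ρ := by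
        simpa using ((hasDerivAt_id ρ).const_mul l).div_const 2
      simpa [Function.comp_def] using (Real.hasDerivAt_sinh (l * ρ / 2)).comp ρ h0
    have dF : HasDerivAt F
        ((u' ρ * Real.sinh (l * ρ) + u ρ * (Real.cosh (l * ρ) * l)) / l +
          (4 * H / l ^ 2) *
            (2 * Real.sinh (l * ρ / 2) ^ 1 * (Real.cosh (l * ρ / 2) * (l / 2)))) ρ := by
      exact (((hu ρ hρ).mul d1).div_const l).add ((d2.pow 2).const_mul (4 * H / l ^ 2))
    convert dF using 1
    rw [hode ρ hρ]
    have hdouble : Real.sinh (l * ρ) = 2 * Real.sinh (l * ρ / 2) * Real.cosh (l * ρ / 2) := by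
      rw [show l * ρ = 2 * (l * ρ / 2) by ring, Real.sinh_two_mul]; ring_nf
    rw [hdouble] at hs ⊢
    field_simp
    ring
  intro ρ₁ h₁ ρ₂ h₂
  have := (convex_Ioi (0:ℝ)).norm_image_sub_le_of_norm_hasDerivWithin_le
    (f := F) (f' := fun _ => 0) (C := 0)
    (fun x hx => (key x hx).hasDerivWithinAt) (fun x _ => by simp) h₂ h₁
  simpa [sub_eq_zero] using this
end

section
/- Let κ ≠ 0, ε ∈ {−1, 1}, and m, b, H, I ∈ ℝ, and let U be a positive differentiable function on an open interval. Define z := (1 − κ·(m²U² − ε·b²))^{1/2} and assume z > 0 on the interval. If U satisfies κ²·ε·[ (m²U² − ε·b²)·(1 − κ(m²U² − ε·b²)) − m⁴·U²·(U')² ] / (1 − κ(m²U² − ε·b²)) = (2H·z + κ·I)² on the interval, then z satisfies the first-order ODE (z')² = −(4H²ε + κ)·z² − 4HκIε·z + κ·(1 − κ·I²·ε) on the interval. -/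
/-- Section 2.3: the first integral (integral4) of the mean curvature equation becomes, under the
substitution `z = (1 − κ(m²U² − εb²))^{1/2}`, the first-order ODE (kappa) for `z`. -/
theorem stmt_2 (κ ε m b H I : ℝ) (hκ : κ ≠ 0) (hε : ε = 1 ∨ ε = -1)
    (a₁ a₂ : ℝ) (U U' : ℝ → ℝ)
    (hUpos : ∀ s ∈ Set.Ioo a₁ a₂, 0 < U s)
    (hU : ∀ s ∈ Set.Ioo a₁ a₂, HasDerivAt U (U' s) s)
    (z : ℝ → ℝ)
    (hz : ∀ s, z s = Real.sqrt (1 - κ * (m ^ 2 * U s ^ 2 - ε * b ^ 2)))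
    (hzpos : ∀ s ∈ Set.Ioo a₁ a₂, 0 < z s)
    (heq : ∀ s ∈ Set.Ioo a₁ a₂,
      κ ^ 2 * ε * ((m ^ 2 * U s ^ 2 - ε * b ^ 2) * (1 - κ * (m ^ 2 * U s ^ 2 - ε * b ^ 2))
          - m ^ 4 * U s ^ 2 * U' s ^ 2) / (1 - κ * (m ^ 2 * U s ^ 2 - ε * b ^ 2))
        = (2 * H * z s + κ * I) ^ 2) :
    ∀ s ∈ Set.Ioo a₁ a₂,
      (deriv z s) ^ 2 = -(4 * H ^ 2 * ε + κ) * z s ^ 2 - 4 * H * κ * I * ε * z s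
        + κ * (1 - κ * I ^ 2 * ε) := by
  intro s hs
  have hzp := hzpos s hs
  have hfpos : 0 < 1 - κ * (m ^ 2 * U s ^ 2 - ε * b ^ 2) := by
    have := hzp
    rw [hz s] at this
    exact Real.sqrt_pos.mp this
  have hzsq : z s ^ 2 = 1 - κ * (m ^ 2 * U s ^ 2 - ε * b ^ 2) := by
    rw [hz s]
    exact Real.sq_sqrt hfpos.le
  have hf : HasDerivAt (fun t => 1 - κ * (m ^ 2 * U t ^ 2 - ε * b ^ 2))
      (-(κ * (m ^ 2 * (2 * U s ^ 1 * U' s)))) s := by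
    have h2 : HasDerivAt (fun t => U t ^ 2) (2 * U s ^ 1 * U' s) s := by
      simpa using (hU s hs).fun_pow 2
    exact ((((h2.const_mul (m ^ 2)).sub_const (ε * b ^ 2)).const_mul κ).const_sub 1)
  have hzd : deriv z s
      = (-(κ * (m ^ 2 * (2 * U s ^ 1 * U' s)))) /
        (2 * Real.sqrt (1 - κ * (m ^ 2 * U s ^ 2 - ε * b ^ 2))) := by
    have : z = fun t => Real.sqrt (1 - κ * (m ^ 2 * U t ^ 2 - ε * b ^ 2)) := funext hz
    rw [this]
    exact (hf.sqrt hfpos.ne').deriv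
  rw [← hz s] at hzd
  have hεsq : ε ^ 2 = 1 := by rcases hε with h | h <;> simp [h]
  have heqs := heq s hs
  rw [← hzsq] at heqs
  have hzne : z s ≠ 0 := hzp.ne'
  have hd2 : (deriv z s) ^ 2 * z s ^ 2 = κ ^ 2 * m ^ 4 * U s ^ 2 * U' s ^ 2 := by
    rw [hzd]
    field_simp
  have heq2 : κ ^ 2 * ε * ((m ^ 2 * U s ^ 2 - ε * b ^ 2) * z s ^ 2
      - m ^ 4 * U s ^ 2 * U' s ^ 2) = (2 * H * z s + κ * I) ^ 2 * z s ^ 2 := by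
    have h2 : z s ^ 2 ≠ 0 := pow_ne_zero 2 hzne
    field_simp at heqs
    linarith [heqs]
  have hA : κ * (m ^ 2 * U s ^ 2 - ε * b ^ 2) = 1 - z s ^ 2 := by linarith [hzsq]
  have h2 : z s ^ 2 ≠ 0 := pow_ne_zero 2 hzne
  have key2 : (deriv z s) ^ 2 * z s ^ 2 = (-(4 * H ^ 2 * ε + κ) * z s ^ 2
      - 4 * H * κ * I * ε * z s + κ * (1 - κ * I ^ 2 * ε)) * z s ^ 2 := by
    linear_combination hd2 - ε * heq2
      + (κ ^ 2 * ((m ^ 2 * U s ^ 2 - ε * b ^ 2) * z s ^ 2 - m ^ 4 * U s ^ 2 * U' s ^ 2)) * hεsq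
      + (κ * z s ^ 2) * hA
  exact mul_right_cancel₀ h2 key2
end

section
/- Let ε ∈ {−1, 1} and κ, H, I, s₀ ∈ ℝ with A := 4H²ε + κ < 0 and κ·(A − κ²I²ε) < 0, and set c := ( −κ·(A − κ²I²ε) )^{1/2} / |A|. Then the function z(s) := c·sinh( (−A)^{1/2}·(s − s₀) ) − 2HκIε/A satisfies (z'(s))² = −A·z(s)² − 4HκIε·z(s) + κ·(1 − κ·I²·ε) for all s ∈ ℝ. -/
/-- Formula (24) of Theorem 4: the hyperbolic-sine solution of the ODE (kappa) in the case
`4H²ε + κ < 0` and `κ(4H²ε + κ − κ²I²ε) < 0`. -/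
theorem stmt_3 (ε κ H I s₀ : ℝ) (hε : ε = 1 ∨ ε = -1)
    (hA : 4 * H ^ 2 * ε + κ < 0)
    (hB : κ * ((4 * H ^ 2 * ε + κ) - κ ^ 2 * I ^ 2 * ε) < 0)
    (c : ℝ)
    (hc : c = Real.sqrt (-(κ * ((4 * H ^ 2 * ε + κ) - κ ^ 2 * I ^ 2 * ε)))
        / |4 * H ^ 2 * ε + κ|)
    (z : ℝ → ℝ)
    (hzdef : ∀ s, z s = c * Real.sinh (Real.sqrt (-(4 * H ^ 2 * ε + κ)) * (s - s₀))
        - 2 * H * κ * I * ε / (4 * H ^ 2 * ε + κ)) :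
    ∀ s, (deriv z s) ^ 2 = -(4 * H ^ 2 * ε + κ) * z s ^ 2 - 4 * H * κ * I * ε * z s
      + κ * (1 - κ * I ^ 2 * ε) := by
  intro s
  set A := 4 * H ^ 2 * ε + κ with hAdef
  set a := Real.sqrt (-A) with ha
  have hAne : A ≠ 0 := ne_of_lt hA
  have ha2 : a ^ 2 = -A := Real.sq_sqrt (by linarith)
  have hc2 : c ^ 2 * A ^ 2 = -(κ * (A - κ ^ 2 * I ^ 2 * ε)) := by
    rw [hc, div_pow, sq_abs, div_mul_cancel₀ _ (by positivity : A ^ 2 ≠ 0)]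
    exact Real.sq_sqrt (by linarith)
  have hε2 : ε ^ 2 = 1 := by rcases hε with h | h <;> rw [h] <;> norm_num
  have hzd : HasDerivAt z (c * (Real.cosh (a * (s - s₀)) * a)) s := by
    have h1 : HasDerivAt (fun s : ℝ => a * (s - s₀)) a s := by
      simpa using ((hasDerivAt_id s).sub_const s₀).const_mul a
    have h2 := (Real.hasDerivAt_sinh (a * (s - s₀))).comp s h1
    have h3 := (h2.const_mul c).sub_const (2 * H * κ * I * ε / A)
    exact h3.congr_of_eventuallyEq
      (Filter.Eventually.of_forall fun t => by simp [hzdef t, Function.comp])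
  rw [hzd.deriv, hzdef s]
  have hcosh : Real.cosh (a * (s - s₀)) ^ 2 = 1 + Real.sinh (a * (s - s₀)) ^ 2 := by
    rw [Real.cosh_sq]; ring
  field_simp
  linear_combination (c ^ 2 * Real.cosh (a * (s - s₀)) ^ 2 * A) * ha2
    - (c ^ 2 * A ^ 2) * hcosh - hc2 + (κ ^ 2 * I ^ 2 * ε) * hAdef
end

section
/- Let ε ∈ {−1, 1} and κ, H, I, s₀ ∈ ℝ with A := 4H²ε + κ < 0 and κ·(A − κ²I²ε) > 0, and set c := ( κ·(A − κ²I²ε) )^{1/2} / |A|. Then the function z(s) := c·cosh( (−A)^{1/2}·(s − s₀) ) − 2HκIε/A satisfies (z'(s))² = −A·z(s)² − 4HκIε·z(s) + κ·(1 − κ·I²·ε) for all s ∈ ℝ. -/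
/-- Formula (25) of Theorem 4: the hyperbolic-cosine solution of the ODE (kappa) in the case
`4H²ε + κ < 0` and `κ(4H²ε + κ − κ²I²ε) > 0`. -/
theorem stmt_4 (ε κ H I s₀ : ℝ) (hε : ε = 1 ∨ ε = -1)
    (hA : 4 * H ^ 2 * ε + κ < 0)
    (hB : 0 < κ * ((4 * H ^ 2 * ε + κ) - κ ^ 2 * I ^ 2 * ε))
    (c : ℝ)
    (hc : c = Real.sqrt (κ * ((4 * H ^ 2 * ε + κ) - κ ^ 2 * I ^ 2 * ε))
        / |4 * H ^ 2 * ε + κ|)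
    (z : ℝ → ℝ)
    (hzdef : ∀ s, z s = c * Real.cosh (Real.sqrt (-(4 * H ^ 2 * ε + κ)) * (s - s₀))
        - 2 * H * κ * I * ε / (4 * H ^ 2 * ε + κ)) :
    ∀ s, (deriv z s) ^ 2 = -(4 * H ^ 2 * ε + κ) * z s ^ 2 - 4 * H * κ * I * ε * z s
      + κ * (1 - κ * I ^ 2 * ε) := by
  intro s
  set A : ℝ := 4 * H ^ 2 * ε + κ with hAdef
  set B : ℝ := κ * (A - κ ^ 2 * I ^ 2 * ε) with hBdef
  set a : ℝ := Real.sqrt (-A) with hadef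
  have hzfun : z = fun s => c * Real.cosh (a * (s - s₀)) - 2 * H * κ * I * ε / A :=
    funext hzdef
  have ha2 : a ^ 2 = -A := Real.sq_sqrt (by linarith)
  have hAne : A ≠ 0 := ne_of_lt hA
  have hc2 : A ^ 2 * c ^ 2 = B := by
    rw [hc, div_pow, Real.sq_sqrt hB.le, sq_abs]
    exact mul_div_cancel₀ B (pow_ne_zero 2 hAne)
  have hd : HasDerivAt z (c * (Real.sinh (a * (s - s₀)) * a)) s := by
    rw [hzfun]
    have h1 : HasDerivAt (fun s : ℝ => a * (s - s₀)) a s := by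
      simpa using ((hasDerivAt_id s).sub_const s₀).const_mul a
    exact (h1.cosh.const_mul c).sub_const _
  rw [hd.deriv, hzdef s]
  set C := Real.cosh (a * (s - s₀)) with hC
  have hch : Real.sinh (a * (s - s₀)) ^ 2 = C ^ 2 - 1 := by
    have := Real.cosh_sq (a * (s - s₀)); rw [← hC] at this; linarith
  have hlhs : (c * (Real.sinh (a * (s - s₀)) * a)) ^ 2 = c ^ 2 * -A * (C ^ 2 - 1) := by
    rw [mul_pow, mul_pow, hch, ha2]; ring
  rw [hlhs]
  rw [hBdef, hAdef] at hc2
  field_simp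
  linear_combination hc2
end

section
/- Let λ > 0 and H ≠ 0 with 4H² − λ² > 0, and set c := (1 − λ²/(4H²))^{1/2}. Let ρ be a differentiable function on an open interval J with ρ(t) > 0 for all t ∈ J, satisfying the implicit relation (4H² − λ²)·sinh²(λρ(t)/2) + 4H²·sin²(λ·c·t/2) = λ² for all t ∈ J. Then ρ'(t)² + 1 = (λ²/(4H²))·coth²(λρ(t)/2) for all t ∈ J. -/
/-- Formula (1+-) of Theorem 2 (Riemannian case, `κ = −l² < 0`): the rotationally invariant
CMC spheres with `Q = 0` satisfy the profile ODE `(ρ')² + 1 = (l²/4H²)·coth²(lρ/2)`. -/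
theorem stmt_12 (l H : ℝ) (hl : 0 < l) (hH : H ≠ 0)
    (h4 : 0 < 4 * H ^ 2 - l ^ 2)
    (c : ℝ) (hc : c = Real.sqrt (1 - l ^ 2 / (4 * H ^ 2)))
    (a₁ a₂ : ℝ) (ρ ρ' : ℝ → ℝ)
    (hρpos : ∀ t ∈ Set.Ioo a₁ a₂, 0 < ρ t)
    (hρ : ∀ t ∈ Set.Ioo a₁ a₂, HasDerivAt ρ (ρ' t) t)
    (hrel : ∀ t ∈ Set.Ioo a₁ a₂,
      (4 * H ^ 2 - l ^ 2) * Real.sinh (l * ρ t / 2) ^ 2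
        + 4 * H ^ 2 * Real.sin (l * c * t / 2) ^ 2 = l ^ 2) :
    ∀ t ∈ Set.Ioo a₁ a₂, ρ' t ^ 2 + 1 = l ^ 2 / (4 * H ^ 2) *
        (Real.cosh (l * ρ t / 2) / Real.sinh (l * ρ t / 2)) ^ 2 := by
  intro t ht
  have hH2 : (0:ℝ) < 4 * H ^ 2 := by positivity
  have hc2 : 4 * H ^ 2 * c ^ 2 = 4 * H ^ 2 - l ^ 2 := by
    have h1 : (0:ℝ) ≤ 1 - l ^ 2 / (4 * H ^ 2) := by
      rw [sub_nonneg, div_le_one hH2]; linarith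
    rw [hc, Real.sq_sqrt h1]
    field_simp
  -- abbreviations
  set s := Real.sinh (l * ρ t / 2) with hs
  set ch := Real.cosh (l * ρ t / 2) with hch
  set si := Real.sin (l * c * t / 2) with hsi
  set co := Real.cos (l * c * t / 2) with hco
  have hspos : 0 < s := Real.sinh_pos_iff.2 (by have := hρpos t ht; positivity)
  have hch2 : ch ^ 2 = 1 + s ^ 2 := by
    rw [hch, hs]; nlinarith [Real.cosh_sq_sub_sinh_sq (l * ρ t / 2)]
  have hco2 : co ^ 2 = 1 - si ^ 2 := by
    rw [hco, hsi]; nlinarith [Real.sin_sq_add_cos_sq (l * c * t / 2)]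
  -- derivative of the implicit relation
  have h1 : HasDerivAt (fun x => l * ρ x / 2) (l * ρ' t / 2) t :=
    ((hρ t ht).const_mul l).div_const 2
  have h2 : HasDerivAt (fun x => Real.sinh (l * ρ x / 2) ^ 2)
      (2 * s ^ 1 * (ch * (l * ρ' t / 2))) t :=
    (h1.sinh).pow 2
  have h3 : HasDerivAt (fun x => l * c * x / 2) (l * c / 2) t := by
    have := ((hasDerivAt_id t).const_mul (l * c)).div_const 2
    simpa using this
  have h4' : HasDerivAt (fun x => Real.sin (l * c * x / 2) ^ 2)
      (2 * si ^ 1 * (co * (l * c / 2))) t :=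
    (h3.sin).pow 2
  have hg : HasDerivAt (fun x => (4 * H ^ 2 - l ^ 2) * Real.sinh (l * ρ x / 2) ^ 2
      + 4 * H ^ 2 * Real.sin (l * c * x / 2) ^ 2)
      ((4 * H ^ 2 - l ^ 2) * (2 * s ^ 1 * (ch * (l * ρ' t / 2)))
        + 4 * H ^ 2 * (2 * si ^ 1 * (co * (l * c / 2)))) t :=
    (h2.const_mul _).add (h4'.const_mul _)
  have heq : (fun x => (4 * H ^ 2 - l ^ 2) * Real.sinh (l * ρ x / 2) ^ 2
      + 4 * H ^ 2 * Real.sin (l * c * x / 2) ^ 2) =ᶠ[nhds t] fun _ => l ^ 2 := by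
    filter_upwards [isOpen_Ioo.mem_nhds ht] with x hx using hrel x hx
  have hD0 : (4 * H ^ 2 - l ^ 2) * (2 * s ^ 1 * (ch * (l * ρ' t / 2)))
      + 4 * H ^ 2 * (2 * si ^ 1 * (co * (l * c / 2))) = 0 := by
    have := (hg.congr_of_eventuallyEq heq.symm).unique (hasDerivAt_const t (l ^ 2))
    simpa using this
  -- key derivative relation
  have hE : (4 * H ^ 2 - l ^ 2) * s * ch * ρ' t = -(4 * H ^ 2 * c * si * co) := by
    have hl' := hl.ne'
    field_simp at hD0
    nlinarith [hD0]
  have hrel' := hrel t ht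
  have hchpos : 0 < ch := Real.cosh_pos _
  have hsi2 : 4 * H ^ 2 * si ^ 2 = l ^ 2 - (4 * H ^ 2 - l ^ 2) * s ^ 2 := by
    rw [hsi, hs]; linarith [hrel']
  have hco2' : 4 * H ^ 2 * co ^ 2 = (4 * H ^ 2 - l ^ 2) * ch ^ 2 := by
    linear_combination 4 * H ^ 2 * hco2 - hsi2 - (4 * H ^ 2 - l ^ 2) * hch2
  have h1' : 4 * H ^ 2 * ((4 * H ^ 2 - l ^ 2) * s * ch * ρ' t) ^ 2
      = (4 * H ^ 2 * c ^ 2) * (4 * H ^ 2 * si ^ 2) * (4 * H ^ 2 * co ^ 2) := by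
    rw [hE]; ring
  have hK : ((4 * H ^ 2 - l ^ 2) ^ 2 * ch ^ 2) ≠ 0 := by positivity
  have h2' : 4 * H ^ 2 * s ^ 2 * ρ' t ^ 2 = l ^ 2 - (4 * H ^ 2 - l ^ 2) * s ^ 2 := by
    apply mul_right_cancel₀ hK
    linear_combination h1' + (4 * H ^ 2 * si ^ 2) * (4 * H ^ 2 * co ^ 2) * hc2
      + (4 * H ^ 2 - l ^ 2) * (4 * H ^ 2 * co ^ 2) * hsi2
      + (4 * H ^ 2 - l ^ 2) * (l ^ 2 - (4 * H ^ 2 - l ^ 2) * s ^ 2) * hco2'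
  have hgoal : (ρ' t ^ 2 + 1) * (4 * H ^ 2) * s ^ 2 = l ^ 2 * ch ^ 2 := by
    linear_combination h2' - l ^ 2 * hch2
  rw [div_pow, div_mul_div_comm, eq_div_iff (by positivity : (4 * H ^ 2) * s ^ 2 ≠ 0)]
  linear_combination hgoal
end

section
/- Let λ > 0 and H ≠ 0, and let ρ, φ be differentiable real functions on an open interval with ρ(s) > 0 for all s, satisfying φ'(s) = −2H − sinh(φ(s))·λ·coth(λρ(s)) and sinh(φ(s))·λ·coth(λρ(s)/2) = −2H for all s. Then φ'(s) = (1/(4H))·( −4H² + λ²·sinh²(φ(s)) ) for all s. -/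
/-- Equation (asymptoticangle) of the paper (`κ = −l² < 0`): combining the angle equation of
the rotational ODE system with the zero-flux condition (fluxzero) yields
`φ' = (1/4H)(−4H² + l²·sinh²φ)`. -/
theorem stmt_16 (l H : ℝ) (hl : 0 < l) (hH : H ≠ 0) (a₁ a₂ : ℝ)
    (ρ φ φ' : ℝ → ℝ)
    (hρpos : ∀ s ∈ Set.Ioo a₁ a₂, 0 < ρ s)
    (hφ : ∀ s ∈ Set.Ioo a₁ a₂, HasDerivAt φ (φ' s) s)
    (hangle : ∀ s ∈ Set.Ioo a₁ a₂,
      φ' s = -2 * H - Real.sinh (φ s) * (l * (Real.cosh (l * ρ s) / Real.sinh (l * ρ s))))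
    (hflux : ∀ s ∈ Set.Ioo a₁ a₂,
      Real.sinh (φ s) * (l * (Real.cosh (l * ρ s / 2) / Real.sinh (l * ρ s / 2))) = -2 * H) :
    ∀ s ∈ Set.Ioo a₁ a₂,
      φ' s = 1 / (4 * H) * (-(4 * H ^ 2) + l ^ 2 * Real.sinh (φ s) ^ 2) := by
  intro s hs
  have hu : 0 < l * ρ s / 2 := by
    have := hρpos s hs
    positivity
  set u := l * ρ s / 2 with hudef
  have hsa : 0 < Real.sinh u := Real.sinh_pos_iff.mpr hu
  have hca : 0 < Real.cosh u := Real.cosh_pos u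
  have h2 : l * ρ s = 2 * u := by rw [hudef]; ring
  have hf := hflux s hs
  rw [← hudef] at hf
  rw [hangle s hs, h2, Real.sinh_two_mul, Real.cosh_two_mul]
  field_simp at hf ⊢
  linear_combination (-(4 * H * Real.cosh u) - 2 * l * Real.sinh (φ s) * Real.sinh u) * hf
end
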